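/- Assume ZᵀZ is invertible, let P_Z = Z(ZᵀZ)⁻¹Zᵀ, and let z_{i₀} denote the i₀-th row of Z. Let X₀ be an n×k matrix with entries in [−1,1], fix a row i₀ and column j₀, and for t ∈ [−1,1] let X₀(t) be X₀ with its (i₀,j₀) entry replaced by t; set N(t) = F(X₀(t))ᵀ(I−P_Z)F(X₀(t)) + C_F. If the function t ↦ det(N(t)) is a nonzero constant on [−1,1] and z_{i₀}ᵀ(ZᵀZ)⁻¹z_{i₀} < 1, then the function t ↦ tr(N(t)⁻¹) attains its minimum over [−1,1] at a unique point t* ∈ [−1,1]. (This is the A_s part of Corollary 2: when the D_s coordinate-update formula is constant and the nuisance leverage of run i₀ is below one, the A_s-criterion has a unique optimal coordinate exchange.) -/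

import Mathlib

/-!
Write `F(X₀(t)) = F₀ + t e_{i₀} wᵀ`, where `w` is the derivative of row `i₀` of the model matrix
in the exchanged coordinate. Then `N(t) = N₀ + t (f wᵀ + w fᵀ) + s t² w wᵀ` with
`f = F₀ᵀ (I - P_Z) e_{i₀}` and `s = 1 - z_{i₀}ᵀ (ZᵀZ)⁻¹ z_{i₀} > 0`. By the matrix determinant
lemma, `det N(t) = det N₀ · (1 + 2βt + (β² + a (s - γ)) t²)` with `a = wᵀ N₀⁻¹ w > 0`,
`β = wᵀ N₀⁻¹ f` and `γ = fᵀ N₀⁻¹ f`, so a constant determinant forces `β = 0` and `γ = s`.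
Under these relations `N(t)⁻¹ = N₀⁻¹ - t (p qᵀ + q pᵀ) + a t² q qᵀ` with `p = N₀⁻¹ w` and
`q = N₀⁻¹ f`, so `tr N(t)⁻¹` is a quadratic in `t` with leading coefficient `a ‖q‖² > 0`, which
has a unique minimiser on `[-1, 1]`.
-/

open Matrix

/-- The model matrix of an `m`-factor interaction model given by the family `𝒮` of
subsets of factor indices: entry `(i, S)` is `∏_{j ∈ S} X i j`. -/
noncomputable def modelMatrix {n k : ℕ} (𝒮 : Finset (Finset (Fin k)))
    (X : Matrix (Fin n) (Fin k) ℝ) : Matrix (Fin n) {S // S ∈ 𝒮} ℝ :=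
  Matrix.of fun i S => ∏ j ∈ S.1, X i j

/-- The design `X` with its `(i₀, j₀)` entry replaced by `t`. -/
def updateEntry {n k : ℕ} (X : Matrix (Fin n) (Fin k) ℝ) (i₀ : Fin n) (j₀ : Fin k)
    (t : ℝ) : Matrix (Fin n) (Fin k) ℝ :=
  Matrix.of fun i j => if i = i₀ ∧ j = j₀ then t else X i j

/-- The matrix `N(t) = F(X₀(t))ᵀ (I − P_Z) F(X₀(t)) + C_F` of the (Bayesian)
`A_s`-criterion, as a function of the exchanged coordinate value `t`. -/
noncomputable def critMatS {n k b : ℕ} (𝒮 : Finset (Finset (Fin k)))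
    (Z : Matrix (Fin n) (Fin b) ℝ)
    (CF : Matrix {S // S ∈ 𝒮} {S // S ∈ 𝒮} ℝ)
    (X₀ : Matrix (Fin n) (Fin k) ℝ) (i₀ : Fin n) (j₀ : Fin k) (t : ℝ) :
    Matrix {S // S ∈ 𝒮} {S // S ∈ 𝒮} ℝ :=
  (modelMatrix 𝒮 (updateEntry X₀ i₀ j₀ t))ᵀ * (1 - Z * (Zᵀ * Z)⁻¹ * Zᵀ) *
      modelMatrix 𝒮 (updateEntry X₀ i₀ j₀ t) + CF

open Set

lemma strictConvexOn_quadratic {A : ℝ} (hA : 0 < A) (B C : ℝ) :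
    StrictConvexOn ℝ univ fun t : ℝ => A * t ^ 2 + B * t + C := by
  refine ⟨convex_univ, fun x _ y _ hxy a b ha hb hab => ?_⟩
  have hgap : 0 < A * a * b * (x - y) ^ 2 := by
    have := sub_ne_zero.2 hxy
    positivity
  obtain rfl : b = 1 - a := by linarith
  simp only [smul_eq_mul]
  linear_combination hgap

lemma StrictConvexOn.existsUnique_isMinOn {E : Type*} [AddCommGroup E] [Module ℝ E]
    [TopologicalSpace E] {s : Set E} {f : E → ℝ} (hf : StrictConvexOn ℝ s f)
    (hfc : ContinuousOn f s) (hs : IsCompact s) (hne : s.Nonempty) :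
    ∃! x, x ∈ s ∧ IsMinOn f s x := by
  obtain ⟨x, hx, hmin⟩ := hs.exists_isMinOn hne hfc
  exact ⟨x, ⟨hx, hmin⟩, fun y ⟨hy, hymin⟩ => hf.eq_of_isMinOn hymin hmin hy hx⟩

section Projection

variable {n b : Type*} [Fintype n] [DecidableEq n] [Fintype b] [DecidableEq b]

lemma transpose_one_sub_projection (Z : Matrix n b ℝ) :
    (1 - Z * (Zᵀ * Z)⁻¹ * Zᵀ)ᵀ = 1 - Z * (Zᵀ * Z)⁻¹ * Zᵀ := by
  rw [transpose_sub, transpose_one, transpose_mul, transpose_mul, transpose_transpose,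
    transpose_nonsing_inv, transpose_mul, transpose_transpose, Matrix.mul_assoc]

lemma posSemidef_one_sub_projection {Z : Matrix n b ℝ} (hZ : IsUnit (Zᵀ * Z)) :
    (1 - Z * (Zᵀ * Z)⁻¹ * Zᵀ).PosSemidef := by
  set P := Z * (Zᵀ * Z)⁻¹ * Zᵀ
  have hP : P * P = P := by
    calc P * P = Z * (Zᵀ * Z)⁻¹ * ((Zᵀ * Z) * (Zᵀ * Z)⁻¹) * Zᵀ := by
          simp only [P, Matrix.mul_assoc]
      _ = P := by rw [mul_nonsing_inv _ ((isUnit_iff_isUnit_det _).mp hZ), Matrix.mul_one]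
  have hPT : (1 - P)ᵀ = 1 - P := transpose_one_sub_projection Z
  have hidem : (1 - P)ᴴ * (1 - P) = 1 - P := by
    rw [conjTranspose_eq_transpose_of_trivial, hPT]
    simp only [sub_mul, mul_sub, Matrix.one_mul, Matrix.mul_one, hP, sub_self, sub_zero]
  exact hidem ▸ posSemidef_conjTranspose_mul_self (1 - P)

lemma one_sub_projection_apply_self (Z : Matrix n b ℝ) (i : n) :
    (1 - Z * (Zᵀ * Z)⁻¹ * Zᵀ : Matrix n n ℝ) i i = 1 - Z i ⬝ᵥ ((Zᵀ * Z)⁻¹ *ᵥ Z i) := by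
  rw [Matrix.sub_apply, one_apply_eq, dotProduct_mulVec]
  simp [mul_apply, vecMul, dotProduct, Finset.sum_mul]

end Projection

section RankTwoUpdate

variable {ι : Type*}

def rankTwoUpdate (N : Matrix ι ι ℝ) (w f : ι → ℝ) (s t : ℝ) : Matrix ι ι ℝ :=
  N + t • (vecMulVec f w + vecMulVec w f) + (s * t ^ 2) • vecMulVec w w

lemma rankTwoUpdate_add (N C : Matrix ι ι ℝ) (w f : ι → ℝ) (s t : ℝ) :
    rankTwoUpdate (N + C) w f s t = rankTwoUpdate N w f s t + C := by
  unfold rankTwoUpdate; abel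

lemma transpose_mul_mul_add_smul_vecMulVec {n : Type*} [Fintype n] (F : Matrix n ι ℝ)
    {M : Matrix n n ℝ} (hM : Mᵀ = M) (e : n → ℝ) (w : ι → ℝ) (t : ℝ) :
    (F + t • vecMulVec e w)ᵀ * M * (F + t • vecMulVec e w) =
      rankTwoUpdate (Fᵀ * M * F) w (Fᵀ *ᵥ (M *ᵥ e)) (e ⬝ᵥ (M *ᵥ e)) t := by
  have hMe : e ᵥ* M = M *ᵥ e := by rw [← vecMul_transpose, hM]
  have hFE : Fᵀ * M * vecMulVec e w = vecMulVec (Fᵀ *ᵥ (M *ᵥ e)) w := by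
    rw [mul_vecMulVec, mulVec_mulVec]
  have hEF : (vecMulVec e w)ᵀ * M * F = vecMulVec w (Fᵀ *ᵥ (M *ᵥ e)) := by
    rw [transpose_vecMulVec, vecMulVec_mul, vecMulVec_mul, hMe, mulVec_transpose]
  have hEE : (vecMulVec e w)ᵀ * M * vecMulVec e w = (e ⬝ᵥ (M *ᵥ e)) • vecMulVec w w := by
    rw [transpose_vecMulVec, vecMulVec_mul, hMe, vecMulVec_mul_vecMulVec, dotProduct_comm,
      vecMulVec_smul]
  simp only [rankTwoUpdate, transpose_add, transpose_smul, Matrix.add_mul, Matrix.mul_add,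
    Matrix.smul_mul, Matrix.mul_smul, hFE, hEF, hEE]
  module

variable [Fintype ι] [DecidableEq ι]

lemma det_rankTwoUpdate {N : Matrix ι ι ℝ} (hN : IsUnit N.det) (w f : ι → ℝ) (s t : ℝ) :
    (rankTwoUpdate N w f s t).det = N.det * (1 + (w ⬝ᵥ (N⁻¹ *ᵥ f) + f ⬝ᵥ (N⁻¹ *ᵥ w)) * t +
      ((w ⬝ᵥ (N⁻¹ *ᵥ f)) * (f ⬝ᵥ (N⁻¹ *ᵥ w)) + (w ⬝ᵥ (N⁻¹ *ᵥ w)) * (s - f ⬝ᵥ (N⁻¹ *ᵥ f))) *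
        t ^ 2) := by
  let U : Matrix ι (Fin 2) ℝ := of fun i => ![w i, f i]
  have hU : rankTwoUpdate N w f s t = N + U * (!![s * t ^ 2, t; t, 0] * Uᵀ) := by
    ext i j
    simp [rankTwoUpdate, U, mul_apply, Fin.sum_univ_two, vecMulVec_apply, vecMul, dotProduct]
    ring
  have hG : Uᵀ * N⁻¹ * U =
      !![w ⬝ᵥ (N⁻¹ *ᵥ w), w ⬝ᵥ (N⁻¹ *ᵥ f); f ⬝ᵥ (N⁻¹ *ᵥ w), f ⬝ᵥ (N⁻¹ *ᵥ f)] := by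
    ext i j
    fin_cases i <;> fin_cases j <;>
      simp [U, mul_apply, dotProduct, mulVec, Finset.mul_sum, Finset.sum_mul] <;>
      rw [Finset.sum_comm] <;> simp only [mul_comm, mul_left_comm]
  rw [hU, det_add_mul _ _ hN, Matrix.mul_assoc, Matrix.mul_assoc, ← Matrix.mul_assoc Uᵀ, hG]
  congr 1
  simp [det_fin_two, Matrix.one_fin_two]
  ring

lemma inv_rankTwoUpdate {N : Matrix ι ι ℝ} (hN : IsUnit N.det) (hNT : Nᵀ = N) {w f : ι → ℝ}
    {s : ℝ} (hwf : w ⬝ᵥ (N⁻¹ *ᵥ f) = 0) (hff : f ⬝ᵥ (N⁻¹ *ᵥ f) = s) (t : ℝ) :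
    (rankTwoUpdate N w f s t)⁻¹ = N⁻¹ - t • (vecMulVec (N⁻¹ *ᵥ w) (N⁻¹ *ᵥ f) +
      vecMulVec (N⁻¹ *ᵥ f) (N⁻¹ *ᵥ w)) +
      ((w ⬝ᵥ (N⁻¹ *ᵥ w)) * t ^ 2) • vecMulVec (N⁻¹ *ᵥ f) (N⁻¹ *ᵥ f) := by
  have hvK : ∀ v : ι → ℝ, v ᵥ* N⁻¹ = N⁻¹ *ᵥ v := fun v => by
    rw [← mulVec_transpose, transpose_nonsing_inv, hNT]
  have hNK : ∀ v : ι → ℝ, N *ᵥ (N⁻¹ *ᵥ v) = v := fun v => by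
    rw [mulVec_mulVec, mul_nonsing_inv _ hN, one_mulVec]
  have hfw : f ⬝ᵥ (N⁻¹ *ᵥ w) = 0 := by rw [dotProduct_mulVec, hvK, dotProduct_comm, hwf]
  refine inv_eq_right_inv ?_
  simp only [rankTwoUpdate, Matrix.add_mul, Matrix.mul_add, Matrix.mul_sub, Matrix.smul_mul,
    Matrix.mul_smul, vecMulVec_mul_vecMulVec]
  simp only [mul_nonsing_inv _ hN, mul_vecMulVec, hNK, vecMulVec_mul, hvK, hwf, hfw, hff,
    vecMulVec_smul, zero_smul, vecMulVec_zero]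
  module

lemma trace_inv_rankTwoUpdate {N : Matrix ι ι ℝ} (hN : IsUnit N.det) (hNT : Nᵀ = N)
    {w f : ι → ℝ} {s : ℝ} (hwf : w ⬝ᵥ (N⁻¹ *ᵥ f) = 0) (hff : f ⬝ᵥ (N⁻¹ *ᵥ f) = s) (t : ℝ) :
    (rankTwoUpdate N w f s t)⁻¹.trace = (w ⬝ᵥ (N⁻¹ *ᵥ w)) * ((N⁻¹ *ᵥ f) ⬝ᵥ (N⁻¹ *ᵥ f)) * t ^ 2
      - 2 * ((N⁻¹ *ᵥ w) ⬝ᵥ (N⁻¹ *ᵥ f)) * t + N⁻¹.trace := by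
  rw [inv_rankTwoUpdate hN hNT hwf hff, trace_add, trace_sub, trace_smul, trace_smul, trace_add,
    trace_vecMulVec, trace_vecMulVec, trace_vecMulVec, dotProduct_comm (N⁻¹ *ᵥ f), smul_eq_mul,
    smul_eq_mul]
  ring

theorem existsUnique_isMinOn_trace_inv_rankTwoUpdate {N : Matrix ι ι ℝ} (hN : N.PosDef)
    {w f : ι → ℝ} (hw : w ≠ 0) {s : ℝ} (hs : 0 < s)
    (hdet : ∀ t ∈ Icc (-1 : ℝ) 1, (rankTwoUpdate N w f s t).det = N.det) :
    ∃! t, t ∈ Icc (-1 : ℝ) 1 ∧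
      IsMinOn (fun t => (rankTwoUpdate N w f s t)⁻¹.trace) (Icc (-1) 1) t := by
  have hNdet : IsUnit N.det := hN.det_pos.ne'.isUnit
  have hNT : Nᵀ = N := hN.isHermitian
  have hfw : f ⬝ᵥ (N⁻¹ *ᵥ w) = w ⬝ᵥ (N⁻¹ *ᵥ f) := by
    rw [dotProduct_mulVec, ← mulVec_transpose, transpose_nonsing_inv, hNT, dotProduct_comm]
  have ha : 0 < w ⬝ᵥ (N⁻¹ *ᵥ w) := by simpa using hN.inv.dotProduct_mulVec_pos hw
  obtain ⟨hwf, hff⟩ : w ⬝ᵥ (N⁻¹ *ᵥ f) = 0 ∧ f ⬝ᵥ (N⁻¹ *ᵥ f) = s := by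
    have hpos := hdet 1 (by norm_num)
    have hneg := hdet (-1) (by norm_num)
    rw [det_rankTwoUpdate hNdet, hfw, mul_eq_left₀ hNdet.ne_zero] at hpos hneg
    have hβ : w ⬝ᵥ (N⁻¹ *ᵥ f) = 0 := by linarith
    rw [hβ] at hpos
    refine ⟨hβ, ?_⟩
    nlinarith
  have hq : N⁻¹ *ᵥ f ≠ 0 := fun h => by rw [h, dotProduct_zero] at hff; linarith
  have hA : 0 < (w ⬝ᵥ (N⁻¹ *ᵥ w)) * ((N⁻¹ *ᵥ f) ⬝ᵥ (N⁻¹ *ᵥ f)) :=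
    mul_pos ha (by simpa using dotProduct_star_self_pos_iff.2 hq)
  simp_rw [trace_inv_rankTwoUpdate hNdet hNT hwf hff, sub_eq_add_neg, ← neg_mul]
  exact ((strictConvexOn_quadratic hA _ _).subset (subset_univ _) (convex_Icc _ _))
    |>.existsUnique_isMinOn (by fun_prop) isCompact_Icc (nonempty_Icc.2 (by norm_num))

end RankTwoUpdate

section Design
variable {n k b : ℕ} (𝒮 : Finset (Finset (Fin k)))

-- `∂ F(X) i₀ S / ∂ X i₀ j₀`: the model matrix is affine in each single entry of the design
def modelRowDeriv (X : Matrix (Fin n) (Fin k) ℝ) (i₀ : Fin n) (j₀ : Fin k) :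
    {S // S ∈ 𝒮} → ℝ :=
  fun S => if j₀ ∈ S.1 then ∏ j ∈ S.1.erase j₀, X i₀ j else 0

lemma modelMatrix_updateEntry (X : Matrix (Fin n) (Fin k) ℝ) (i₀ : Fin n) (j₀ : Fin k)
    (t : ℝ) :
    modelMatrix 𝒮 (updateEntry X i₀ j₀ t) = modelMatrix 𝒮 (updateEntry X i₀ j₀ 0) +
      t • vecMulVec (Pi.single i₀ 1) (modelRowDeriv 𝒮 X i₀ j₀) := by
  have hrow : ∀ t j, updateEntry X i₀ j₀ t i₀ j = Function.update (X i₀) j₀ t j := by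
    simp [updateEntry, Function.update_apply]
  ext i S
  by_cases hi : i = i₀
  · subst hi
    by_cases hj : j₀ ∈ S.1
    · simp [modelMatrix, hrow, vecMulVec_apply, modelRowDeriv, hj, Finset.prod_update_of_mem hj,
        Finset.sdiff_singleton_eq_erase]
    · simp [modelMatrix, hrow, vecMulVec_apply, modelRowDeriv, hj, Finset.prod_update_of_notMem hj]
  · simp [modelMatrix, updateEntry, vecMulVec_apply, hi]

lemma modelRowDeriv_ne_zero (X : Matrix (Fin n) (Fin k) ℝ) (i₀ : Fin n) {j₀ : Fin k}
    (hj₀ : {j₀} ∈ 𝒮) : modelRowDeriv 𝒮 X i₀ j₀ ≠ 0 :=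
  fun h => by simpa [modelRowDeriv] using congr_fun h ⟨{j₀}, hj₀⟩

lemma critMatS_eq_rankTwoUpdate (Z : Matrix (Fin n) (Fin b) ℝ)
    (CF : Matrix {S // S ∈ 𝒮} {S // S ∈ 𝒮} ℝ) (X₀ : Matrix (Fin n) (Fin k) ℝ) (i₀ : Fin n)
    (j₀ : Fin k) (t : ℝ) :
    critMatS 𝒮 Z CF X₀ i₀ j₀ t = rankTwoUpdate (critMatS 𝒮 Z CF X₀ i₀ j₀ 0)
      (modelRowDeriv 𝒮 X₀ i₀ j₀)
      ((modelMatrix 𝒮 (updateEntry X₀ i₀ j₀ 0))ᵀ *ᵥ (1 - Z * (Zᵀ * Z)⁻¹ * Zᵀ).col i₀)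
      ((1 - Z * (Zᵀ * Z)⁻¹ * Zᵀ : Matrix (Fin n) (Fin n) ℝ) i₀ i₀) t := by
  rw [critMatS, modelMatrix_updateEntry, transpose_mul_mul_add_smul_vecMulVec _
    (transpose_one_sub_projection Z), single_one_dotProduct, mulVec_single_one, col_apply,
    critMatS, rankTwoUpdate_add]

lemma posSemidef_critMatS {Z : Matrix (Fin n) (Fin b) ℝ} (hZ : IsUnit (Zᵀ * Z))
    {CF : Matrix {S // S ∈ 𝒮} {S // S ∈ 𝒮} ℝ} (hCF : CF.PosSemidef)
    (X₀ : Matrix (Fin n) (Fin k) ℝ) (i₀ : Fin n) (j₀ : Fin k) (t : ℝ) :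
    (critMatS 𝒮 Z CF X₀ i₀ j₀ t).PosSemidef :=
  ((posSemidef_one_sub_projection hZ).conjTranspose_mul_mul_same _).add hCF

end Design

theorem stmt4_general (n k b : ℕ)
    (𝒮 : Finset (Finset (Fin k)))
    (hsingle : ∀ j : Fin k, {j} ∈ 𝒮)
    (Z : Matrix (Fin n) (Fin b) ℝ)
    (hZ : IsUnit (Zᵀ * Z))
    (CF : Matrix {S // S ∈ 𝒮} {S // S ∈ 𝒮} ℝ)
    (hCF : CF.PosSemidef)
    (X₀ : Matrix (Fin n) (Fin k) ℝ)
    (i₀ : Fin n) (j₀ : Fin k)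
    (hdet : ∃ c : ℝ, c ≠ 0 ∧ ∀ t ∈ Set.Icc (-1 : ℝ) 1,
      (critMatS 𝒮 Z CF X₀ i₀ j₀ t).det = c)
    (hlev : Z i₀ ⬝ᵥ ((Zᵀ * Z)⁻¹ *ᵥ Z i₀) < 1) :
    ∃! tstar : ℝ, tstar ∈ Set.Icc (-1 : ℝ) 1 ∧
      ∀ t ∈ Set.Icc (-1 : ℝ) 1,
        ((critMatS 𝒮 Z CF X₀ i₀ j₀ tstar)⁻¹).trace ≤
          ((critMatS 𝒮 Z CF X₀ i₀ j₀ t)⁻¹).trace := by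
  obtain ⟨c, hc, hdet⟩ := hdet
  have hdet₀ := hdet 0 (by norm_num)
  have hN₀ : (critMatS 𝒮 Z CF X₀ i₀ j₀ 0).PosDef :=
    (posSemidef_critMatS 𝒮 hZ hCF X₀ i₀ j₀ 0).posDef_iff_det_ne_zero.2 (hdet₀ ▸ hc)
  have hs : 0 < (1 - Z * (Zᵀ * Z)⁻¹ * Zᵀ : Matrix (Fin n) (Fin n) ℝ) i₀ i₀ := by
    rw [one_sub_projection_apply_self]
    linarith
  have key := existsUnique_isMinOn_trace_inv_rankTwoUpdate hN₀
    (modelRowDeriv_ne_zero 𝒮 X₀ i₀ (hsingle j₀)) hs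
    (fun t ht => by rw [← critMatS_eq_rankTwoUpdate, hdet t ht, hdet₀])
  simpa only [← critMatS_eq_rankTwoUpdate, isMinOn_iff] using key

/-- The `A_s` part of Corollary 2: when the `D_s` coordinate-update formula is constant
and the nuisance leverage of run `i₀` is below one, the `A_s`-criterion has a unique
optimal coordinate exchange. -/
theorem stmt4 (n k m b : ℕ) (hn : 0 < n) (hk : 0 < k) (hm : 0 < m) (hmk : m ≤ k)
    (hb : 0 < b)
    (𝒮 : Finset (Finset (Fin k)))
    (hsingle : ∀ j : Fin k, {j} ∈ 𝒮)
    (hS : ∀ S ∈ 𝒮, S.Nonempty ∧ S.card ≤ m)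
    (hmax : ∃ S ∈ 𝒮, S.card = m)
    (Z : Matrix (Fin n) (Fin b) ℝ)
    (hZ : IsUnit (Zᵀ * Z))
    (CF : Matrix {S // S ∈ 𝒮} {S // S ∈ 𝒮} ℝ)
    (hCF : CF.PosSemidef)
    (X₀ : Matrix (Fin n) (Fin k) ℝ)
    (hX₀ : ∀ i j, X₀ i j ∈ Set.Icc (-1 : ℝ) 1)
    (i₀ : Fin n) (j₀ : Fin k)
    (hdet : ∃ c : ℝ, c ≠ 0 ∧ ∀ t ∈ Set.Icc (-1 : ℝ) 1,
      (critMatS 𝒮 Z CF X₀ i₀ j₀ t).det = c)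
    (hlev : Z i₀ ⬝ᵥ ((Zᵀ * Z)⁻¹ *ᵥ Z i₀) < 1) :
    ∃! tstar : ℝ, tstar ∈ Set.Icc (-1 : ℝ) 1 ∧
      ∀ t ∈ Set.Icc (-1 : ℝ) 1,
        ((critMatS 𝒮 Z CF X₀ i₀ j₀ tstar)⁻¹).trace ≤
          ((critMatS 𝒮 Z CF X₀ i₀ j₀ t)⁻¹).trace :=
  stmt4_general n k b 𝒮 hsingle Z hZ CF hCF X₀ i₀ j₀ hdet hlev
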